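/- Fix θ ∈ ℝ. Let V ⊆ ℂ∖{0} be open with a holomorphic function L : V → ℂ satisfying exp(L(w)) = i·w for all w ∈ V and with Im L bounded on V, and suppose 1 + 2cos(θ)·w·L(w) − w² ≠ 0 on V; define G(w) = 2i·w/(1 + 2cos(θ)·w·L(w) − w²). Let U ⊆ ℂ∖{0} be open with 0 as a limit point, and let F : U → V be holomorphic with G(F(z)) = z for all z ∈ U and F(z) → 0 as z → 0 along U. Then, as z → 0 along U, F′(z) = 1/(2i) − cos(θ)·z·Log(z) + O(z), where Log is the principal complex logarithm. -/

import Mathlib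

/-!
Write `c = cos θ` and `A(w) = 1 + 2c w L(w) - w²`, so that `G(w) = 2i w / A(w)`. Since
`exp L(w) = i w` forces `L'(w) = 1/w`, we have `(w L(w))' = L(w) + 1`, and the logarithms cancel
in `G'(w) = 2i (1 - 2c w + w²) / A(w)²`. Differentiating `G(F(z)) = z` therefore gives
`F' = A(F)² / (2i (1 - 2c F + F²))`.

Because `Re L(w) = log |w|` and `Im L` is bounded, `w L(w)ᵏ → 0` as `w → 0`; hence `A(F) → 1`,
`F(z) ~ z/(2i)`, and `L(F(z)) - Log z = O(1)`. Expanding, `A(F)² = 1 + 4c F L(F) + O(z)` and,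
by `2i F = z A(F)`, `4c F L(F) / (2i) = -c z A(F) L(F) = -c z Log z + O(z)`.
-/

open Complex Filter Topology Asymptotics

noncomputable section

def geodesicDenom (c : ℂ) (L : ℂ → ℂ) (w : ℂ) : ℂ := 1 + 2 * c * w * L w - w ^ 2

def geodesicMap (c : ℂ) (L : ℂ → ℂ) (w : ℂ) : ℂ := 2 * I * w / geodesicDenom c L w

end

theorem Real.tendsto_mul_abs_log_add_pow (C : ℝ) (n : ℕ) :
    Tendsto (fun t : ℝ => t * (|Real.log t| + C) ^ n) (𝓝[>] 0) (𝓝 0) := by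
  have hexp : Tendsto (fun x : ℝ => (x + C) ^ n * Real.exp (-x)) atTop (𝓝 0) := by
    have := ((Real.tendsto_pow_mul_exp_neg_atTop_nhds_zero n).comp
      (tendsto_atTop_add_const_right atTop C tendsto_id)).mul_const (Real.exp C)
    rw [zero_mul] at this
    refine this.congr fun x => ?_
    rw [Function.comp_apply, id, mul_assoc, ← Real.exp_add]
    ring_nf
  refine (hexp.comp (tendsto_neg_atBot_atTop.comp Real.tendsto_log_nhdsGT_zero)).congr' ?_
  filter_upwards [Ioo_mem_nhdsGT (zero_lt_one' ℝ)] with t ⟨ht0, ht1⟩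
  simp [abs_of_neg (Real.log_neg ht0 ht1), Real.exp_log ht0, mul_comm]

theorem tendsto_mul_pow_of_norm_le_abs_log_add {s : Set ℂ} {f : ℂ → ℂ} {C : ℝ}
    (hs : (0 : ℂ) ∉ s) (hf : ∀ w ∈ s, ‖f w‖ ≤ |Real.log ‖w‖| + C) (n : ℕ) :
    Tendsto (fun w => w * f w ^ n) (𝓝[s] 0) (𝓝 0) := by
  have hnorm : Tendsto (fun w : ℂ => ‖w‖) (𝓝[s] 0) (𝓝[>] 0) :=
    tendsto_norm_nhdsNE_zero.mono_left (nhdsWithin_mono _ fun w hw h => hs (h ▸ hw))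
  refine squeeze_zero_norm' ?_ ((Real.tendsto_mul_abs_log_add_pow C n).comp hnorm)
  filter_upwards [self_mem_nhdsWithin] with w hw
  rw [Function.comp_apply, norm_mul, norm_pow]
  gcongr
  exact hf w hw

theorem Complex.re_eq_log_norm_of_exp_eq_I_mul {ζ w : ℂ} (h : exp ζ = I * w) :
    ζ.re = Real.log ‖w‖ := by
  rw [← Real.log_exp ζ.re, ← Complex.norm_exp, h, norm_mul, norm_I, one_mul]

theorem Complex.norm_le_abs_log_norm_add_of_exp_eq_I_mul {ζ w : ℂ} {M : ℝ}
    (h : exp ζ = I * w) (hM : |ζ.im| ≤ M) : ‖ζ‖ ≤ |Real.log ‖w‖| + M :=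
  calc ‖ζ‖ ≤ |ζ.re| + |ζ.im| := norm_le_abs_re_add_abs_im ζ
    _ ≤ |Real.log ‖w‖| + M := by rw [re_eq_log_norm_of_exp_eq_I_mul h]; gcongr

theorem Complex.norm_log_le (z : ℂ) : ‖log z‖ ≤ |Real.log ‖z‖| + Real.pi :=
  calc ‖log z‖ ≤ |(log z).re| + |(log z).im| := norm_le_abs_re_add_abs_im _
    _ ≤ |Real.log ‖z‖| + Real.pi := by rw [log_re, log_im]; gcongr; exact abs_arg_le_pi z

theorem hasDerivAt_inv_of_exp_eq_mul {L : ℂ → ℂ} {a w : ℂ} (ha : a ≠ 0)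
    (hL : DifferentiableAt ℂ L w) (h : (fun u => exp (L u)) =ᶠ[𝓝 w] fun u => a * u) :
    HasDerivAt L w⁻¹ w := by
  have hchain : exp (L w) * deriv L w = a :=
    (hL.hasDerivAt.cexp.congr_of_eventuallyEq h.symm).unique
      (by simpa using (hasDerivAt_id w).const_mul a)
  rw [h.eq_of_nhds, mul_assoc] at hchain
  have hw : w * deriv L w = 1 := mul_left_cancel₀ ha (hchain.trans (mul_one a).symm)
  rw [← eq_inv_of_mul_eq_one_right hw]
  exact hL.hasDerivAt

theorem mul_deriv_eq_one_of_comp_eq_id {F G : ℂ → ℂ} {G' z : ℂ} (hG : HasDerivAt G G' (F z))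
    (hF : DifferentiableAt ℂ F z) (h : G ∘ F =ᶠ[𝓝 z] id) : G' * deriv F z = 1 :=
  ((hG.comp z hF.hasDerivAt).congr_of_eventuallyEq h.symm).unique (hasDerivAt_id z)

theorem hasDerivAt_geodesicMap {c : ℂ} {L : ℂ → ℂ} {w : ℂ} (hL : HasDerivAt L w⁻¹ w)
    (hw : w ≠ 0) (hA : geodesicDenom c L w ≠ 0) :
    HasDerivAt (geodesicMap c L)
      (2 * I * (1 - 2 * c * w + w ^ 2) / geodesicDenom c L w ^ 2) w := by
  have hA' : HasDerivAt (geodesicDenom c L) (2 * c * (L w + 1) - 2 * w) w :=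
    ((((hasDerivAt_id' w).const_mul (2 * c)).fun_mul hL).const_add 1).fun_sub
      ((hasDerivAt_id' w).fun_pow 2) |>.congr_deriv (by field_simp; ring)
  refine (((hasDerivAt_id' w).const_mul (2 * I)).fun_div hA' hA).congr_deriv ?_
  simp only [geodesicDenom]
  ring

theorem deriv_eq_geodesicDenom_sq_div {c : ℂ} {L F : ℂ → ℂ} {z : ℂ}
    (hL : DifferentiableAt ℂ L (F z)) (hexp : (fun u => exp (L u)) =ᶠ[𝓝 (F z)] fun u => I * u)
    (hF : DifferentiableAt ℂ F z) (hGF : geodesicMap c L ∘ F =ᶠ[𝓝 z] id)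
    (hA : geodesicDenom c L (F z) ≠ 0) :
    deriv F z = geodesicDenom c L (F z) ^ 2 / (2 * I * (1 - 2 * c * F z + F z ^ 2)) := by
  have hF0 : F z ≠ 0 := by
    rintro h
    simpa [h] using hexp.eq_of_nhds
  have hG := hasDerivAt_geodesicMap (hasDerivAt_inv_of_exp_eq_mul I_ne_zero hL hexp) hF0 hA
  rw [eq_inv_of_mul_eq_one_right (mul_deriv_eq_one_of_comp_eq_id hG hF hGF), inv_div]

theorem exists_pos_bound_of_isBigO_nhdsWithin_zero {E E' : Type*} [SeminormedAddCommGroup E]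
    [Norm E'] {U : Set E} {f : E → E'} (h : f =O[𝓝[U] 0] id) :
    ∃ C > (0 : ℝ), ∃ δ > (0 : ℝ), ∀ z ∈ U, ‖z‖ < δ → ‖f z‖ ≤ C * ‖z‖ := by
  obtain ⟨C, hC, hCf⟩ := h.exists_pos
  obtain ⟨δ, hδ, hδf⟩ := Metric.eventually_nhds_iff.1 (eventually_nhdsWithin_iff.1 hCf.bound)
  exact ⟨C, hC, δ, hδ, fun z hz hzδ => hδf (by rwa [dist_zero_right]) hz⟩

section Asymptotics

variable {l : Filter ℂ} {c : ℂ} {L F : ℂ → ℂ}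

theorem tendsto_geodesicDenom (hF : Tendsto F l (𝓝 0))
    (hFL : Tendsto (fun z => F z * L (F z)) l (𝓝 0)) :
    Tendsto (fun z => geodesicDenom c L (F z)) l (𝓝 1) := by
  have := ((hFL.const_mul (2 * c)).const_add 1).sub (hF.pow 2)
  rw [mul_zero, add_zero, zero_pow two_ne_zero, sub_zero] at this
  refine this.congr fun z => ?_
  simp only [geodesicDenom]
  ring

theorem tendsto_div_of_two_I_mul_eq_mul {A : ℂ → ℂ}
    (hkey : ∀ᶠ z in l, 2 * I * F z = z * A z) (hz : ∀ᶠ z in l, z ≠ 0)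
    (hA : Tendsto A l (𝓝 1)) : Tendsto (fun z => F z / z) l (𝓝 (1 / (2 * I))) := by
  refine (hA.div_const (2 * I)).congr' ?_
  filter_upwards [hkey, hz] with z hkey hz
  field_simp
  linear_combination -hkey

theorem isBigO_sub_log_one {Λ : ℂ → ℂ} {M : ℝ} {a : ℂ} (ha : a ≠ 0)
    (hratio : Tendsto (fun z => F z / z) l (𝓝 a))
    (hre : ∀ᶠ z in l, (Λ z).re = Real.log ‖F z‖) (him : ∀ᶠ z in l, |(Λ z).im| ≤ M) :
    (fun z => Λ z - log z) =O[l] fun _ => (1 : ℂ) := by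
  have hlog : Tendsto (fun z => Real.log ‖F z / z‖) l (𝓝 (Real.log ‖a‖)) :=
    (Real.continuousAt_log (norm_ne_zero_iff.2 ha)).tendsto.comp hratio.norm
  refine IsBigO.of_bound (|Real.log ‖a‖| + 1 + M + Real.pi) ?_
  filter_upwards [hratio.eventually_ne ha, hlog.abs.eventually_lt_const (lt_add_one _), hre, him]
    with z hne hlt hre him
  obtain ⟨hF, hz⟩ := div_ne_zero_iff.1 hne
  have hre' : (Λ z - log z).re = Real.log ‖F z / z‖ := by
    rw [sub_re, hre, log_re, norm_div,
      Real.log_div (norm_ne_zero_iff.2 hF) (norm_ne_zero_iff.2 hz)]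
  have him' : |(Λ z - log z).im| ≤ M + Real.pi := by
    rw [sub_im, log_im]
    exact (abs_sub _ _).trans (add_le_add him (abs_arg_le_pi z))
  calc ‖Λ z - log z‖ ≤ |(Λ z - log z).re| + |(Λ z - log z).im| := norm_le_abs_re_add_abs_im _
    _ ≤ |Real.log ‖a‖| + 1 + M + Real.pi := by rw [hre']; linarith
    _ = (|Real.log ‖a‖| + 1 + M + Real.pi) * ‖(1 : ℂ)‖ := by rw [norm_one, mul_one]

theorem isBigO_geodesicDenom_sq_div_sub
    (hkey : ∀ᶠ z in l, 2 * I * F z = z * geodesicDenom c L (F z))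
    (hF : Tendsto F l (𝓝 0)) (hFL : Tendsto (fun z => F z * L (F z)) l (𝓝 0))
    (hFL2 : Tendsto (fun z => F z * L (F z) ^ 2) l (𝓝 0))
    (hlog : Tendsto (fun z => z * log z) l (𝓝 0))
    (hsub : (fun z => L (F z) - log z) =O[l] fun _ => (1 : ℂ)) :
    (fun z => geodesicDenom c L (F z) ^ 2 / (2 * I * (1 - 2 * c * F z + F z ^ 2))
      - 1 / (2 * I) + c * z * log z) =O[l] id := by
  set A := fun z => geodesicDenom c L (F z) with hA_def
  set W := fun z => (A z - 1) * L (F z) with hW_def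
  have hA : Tendsto A l (𝓝 1) := tendsto_geodesicDenom hF hFL
  have hW : Tendsto W l (𝓝 0) := by
    have := (hFL2.const_mul (2 * c)).sub (hF.mul hFL)
    rw [mul_zero, zero_mul, sub_zero] at this
    refine this.congr fun z => ?_
    simp only [hW_def, hA_def, geodesicDenom]
    ring
  have h2I : (2 * I : ℂ) ≠ 0 := mul_ne_zero two_ne_zero I_ne_zero
  have hD : Tendsto (fun z => 2 * I * (1 - 2 * c * F z + F z ^ 2)) l (𝓝 (2 * I)) := by
    simpa using ((((hF.const_mul (2 * c)).const_sub 1).add (hF.pow 2)).const_mul (2 * I))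
  have hFO : F =O[l] id := by
    have : (fun z => z * (A z / (2 * I))) =O[l] fun z => z * 1 :=
      (isBigO_refl _ _).mul ((hA.div_const _).isBigO_one ℂ)
    refine this.congr' ?_ (.of_forall mul_one)
    filter_upwards [hkey] with z hz
    field_simp
    linear_combination -hz
  -- `2i (1 - 2cF + F²) (F' - 1/(2i) + c z Log z) = z R₁ + F R₂`, with `R₁ = O(1)` and `R₂ → 2c`.
  have hR₁ : (fun z => -2 * I * c * ((L (F z) - log z) + W z)) =O[l] fun _ => (1 : ℂ) :=
    (hsub.add (hW.isBigO_one ℂ)).const_mul_left _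
  have hR₂ : (fun z => 2 * c * (1 + W z) - F z * (A z + 2)
      - 2 * I * c * (z * log z) * (2 * c - F z)) =O[l] fun _ => (1 : ℂ) :=
    Tendsto.isBigO_one ℂ (((hW.const_add 1).const_mul (2 * c)).sub (hF.mul (hA.add_const 2))
      |>.sub ((hlog.const_mul (2 * I * c)).mul (hF.const_sub (2 * c))))
  refine (((isBigO_refl id l).mul hR₁).add (hFO.mul hR₂)).mul
    ((hD.inv₀ h2I).isBigO_one ℂ) |>.congr' ?_ (.of_forall fun z => by simp)
  filter_upwards [hkey, hD.eventually_ne h2I] with z hz hD0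
  simp only [hW_def, hA_def, id, geodesicDenom] at hz ⊢
  have hD0' := right_ne_zero_of_mul hD0
  field_simp
  linear_combination (2 * I * c * L (F z)) * hz - 4 * c * L (F z) * F z * I_sq

end Asymptotics

theorem geodesic_pair_derivative_asymptotics (θ : ℝ)
    (V : Set ℂ) (hVopen : IsOpen V) (hV0 : (0 : ℂ) ∉ V)
    (L : ℂ → ℂ) (hLhol : DifferentiableOn ℂ L V)
    (hLexp : ∀ w ∈ V, Complex.exp (L w) = Complex.I * w)
    (hLbd : ∃ M : ℝ, ∀ w ∈ V, |(L w).im| ≤ M)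
    (hden : ∀ w ∈ V, 1 + 2 * (Real.cos θ : ℂ) * w * L w - w ^ 2 ≠ 0)
    (U : Set ℂ) (hUopen : IsOpen U) (hU0 : (0 : ℂ) ∉ U)
    (F : ℂ → ℂ) (hFhol : DifferentiableOn ℂ F U) (hFV : ∀ z ∈ U, F z ∈ V)
    (hGF : ∀ z ∈ U,
      2 * Complex.I * F z / (1 + 2 * (Real.cos θ : ℂ) * F z * L (F z) - (F z) ^ 2) = z)
    (hFlim : Tendsto F (nhdsWithin 0 U) (nhds 0)) :
    ∃ C > (0 : ℝ), ∃ δ > (0 : ℝ), ∀ z ∈ U, ‖z‖ < δ →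
      ‖deriv F z - 1 / (2 * Complex.I) + (Real.cos θ : ℂ) * z * Complex.log z‖
        ≤ C * ‖z‖ := by
  obtain ⟨M, hM⟩ := hLbd
  have hderiv : ∀ z ∈ U, deriv F z = geodesicDenom (Real.cos θ) L (F z) ^ 2 /
      (2 * I * (1 - 2 * (Real.cos θ : ℂ) * F z + F z ^ 2)) := fun z hz =>
    deriv_eq_geodesicDenom_sq_div
      ((hLhol _ (hFV z hz)).differentiableAt (hVopen.mem_nhds (hFV z hz)))
      (eventually_of_mem (hVopen.mem_nhds (hFV z hz)) hLexp)
      ((hFhol z hz).differentiableAt (hUopen.mem_nhds hz))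
      (eventually_of_mem (hUopen.mem_nhds hz) hGF) (hden _ (hFV z hz))
  have hFL : ∀ n : ℕ, Tendsto (fun z => F z * L (F z) ^ n) (𝓝[U] 0) (𝓝 0) := fun n =>
    (tendsto_mul_pow_of_norm_le_abs_log_add hV0
      (fun w hw => norm_le_abs_log_norm_add_of_exp_eq_I_mul (hLexp w hw) (hM w hw)) n).comp
      (tendsto_nhdsWithin_iff.2 ⟨hFlim, eventually_mem_nhdsWithin.mono hFV⟩)
  have hFL1 : Tendsto (fun z => F z * L (F z)) (𝓝[U] 0) (𝓝 0) := by simpa using hFL 1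
  have hkey : ∀ᶠ z in 𝓝[U] 0, 2 * I * F z = z * geodesicDenom (Real.cos θ) L (F z) :=
    eventually_mem_nhdsWithin.mono fun z hz => (div_eq_iff (hden _ (hFV z hz))).1 (hGF z hz)
  have hratio := tendsto_div_of_two_I_mul_eq_mul hkey
    (eventually_mem_nhdsWithin.mono fun z hz h => hU0 (h ▸ hz)) (tendsto_geodesicDenom hFlim hFL1)
  have hsub := isBigO_sub_log_one (by simp) hratio
    (eventually_mem_nhdsWithin.mono fun z hz => re_eq_log_norm_of_exp_eq_I_mul (hLexp _ (hFV z hz)))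
    (eventually_mem_nhdsWithin.mono fun z hz => hM _ (hFV z hz))
  have hlog : Tendsto (fun z => z * log z) (𝓝[U] 0) (𝓝 0) := by
    simpa using tendsto_mul_pow_of_norm_le_abs_log_add hU0 (fun z _ => norm_log_le z) 1
  refine exists_pos_bound_of_isBigO_nhdsWithin_zero <|
    (isBigO_geodesicDenom_sq_div_sub hkey hFlim hFL1 (hFL 2) hlog hsub).congr' ?_ .rfl
  filter_upwards [self_mem_nhdsWithin] with z hz
  rw [hderiv z hz]
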